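/- There is a universal constant C such that for every ε ∈ (0,1], t ∈ [0,ε], τ > 0, r ∈ ℝ, and all families w̄ = (w̄_ξ)_{ξ∈ℝ} and A = (A_ξ)_{ξ∈ℝ} for which the right-hand side norms are finite and the integral converges absolutely, one has | ∫_ℝ iξ ( ∫_0^∞ w̄_ξ(y) dy ) conj(A_ξ) e^{2τ|ξ|} ⟨ξ⟩^{2r} dξ | ≤ C ‖|∂ₓ|^{1/2} w̄‖_{τ,r} ‖|∂ₓ|^{1/2} A‖~_{τ,r}. -/

import Mathlib

/-!
Because `t ≤ ε`, the Gaussian weight satisfies `ρ(y)⁻² ≤ e^{-y²/8}`, and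
`∫₀^∞ e^{-y²/8} dy ≤ √(8π) ≤ 9`. Cauchy–Schwarz in `y` therefore gives
`|∫₀^∞ w̄_ξ| ≤ 3 (∫₀^∞ ρ² |w̄_ξ|²)^{1/2}`. Splitting the weight `|ξ| e^{2τ|ξ|} ⟨ξ⟩^{2r}` evenly
between `w̄` and `A` and applying Cauchy–Schwarz in `ξ` yields the estimate with `C = 3`.
-/

open MeasureTheory Set Filter

noncomputable section

/-- Gaussian weight `ρ(y) = exp(y²/(8(1+t/ε)))`. -/
def rho (ε t y : ℝ) : ℝ := Real.exp (y ^ 2 / (8 * (1 + t / ε)))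

/-- Japanese bracket `⟨ξ⟩ = √(1+ξ²)`. -/
def brak (ξ : ℝ) : ℝ := Real.sqrt (1 + ξ ^ 2)

/-- Combined weight `ρ(y)² e^{2τ|ξ|} ⟨ξ⟩^{2s}` in the squared analytic norms. -/
def wgt (ε t τ s ξ y : ℝ) : ℝ :=
  (rho ε t y) ^ 2 * Real.exp (2 * τ * |ξ|) * brak ξ ^ (2 * s)

/-- Weight `e^{2τ|ξ|} ⟨ξ⟩^{2s}` for the squared analytic norms of boundary data. -/
def aWgt (τ s ξ : ℝ) : ℝ := Real.exp (2 * τ * |ξ|) * brak ξ ^ (2 * s)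

/-- Analytic norm `‖w‖_{τ,s}` (with Fourier multiplier `m`):
`(∫_ℝ ∫_0^∞ m(ξ) ρ(y)² |w_ξ(y)|² e^{2τ|ξ|} ⟨ξ⟩^{2s} dy dξ)^{1/2}`. -/
def wNorm (ε t τ s : ℝ) (m : ℝ → ℝ) (w : ℝ → ℝ → ℂ) : ℝ :=
  Real.sqrt (∫ ξ : ℝ, ∫ y in Ioi (0 : ℝ), m ξ * ‖w ξ y‖ ^ 2 * wgt ε t τ s ξ y)

/-- Analytic norm `‖A‖~_{τ,s}` (with Fourier multiplier `m`):
`(∫_ℝ m(ξ) |A_ξ|² e^{2τ|ξ|} ⟨ξ⟩^{2s} dξ)^{1/2}`. -/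
def aNorm (τ s : ℝ) (m : ℝ → ℝ) (A : ℝ → ℂ) : ℝ :=
  Real.sqrt (∫ ξ : ℝ, m ξ * ‖A ξ‖ ^ 2 * aWgt τ s ξ)

/-- Finiteness of the squared norm `‖·‖_{τ,s}` with multiplier `m`. -/
def wFinite (ε t τ s : ℝ) (m : ℝ → ℝ) (w : ℝ → ℝ → ℂ) : Prop :=
  Integrable (fun p : ℝ × ℝ => m p.1 * ‖w p.1 p.2‖ ^ 2 * wgt ε t τ s p.1 p.2)
    ((volume : Measure ℝ).prod ((volume : Measure ℝ).restrict (Ioi 0)))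

/-- Finiteness of the squared norm `‖·‖~_{τ,s}` with multiplier `m`. -/
def aFinite (τ s : ℝ) (m : ℝ → ℝ) (A : ℝ → ℂ) : Prop :=
  Integrable (fun ξ : ℝ => m ξ * ‖A ξ‖ ^ 2 * aWgt τ s ξ) (volume : Measure ℝ)

section CauchySchwarz

variable {α : Type*} [MeasurableSpace α] {μ : Measure α} {f g : α → ℝ}

theorem MeasureTheory.Integrable.memLp_two_sqrt (hf : Integrable f μ) (hf0 : 0 ≤ᵐ[μ] f) :
    MemLp (fun x => √(f x)) 2 μ := by
  refine (memLp_two_iff_integrable_sq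
    (Real.continuous_sqrt.comp_aestronglyMeasurable hf.1)).2 (hf.congr ?_)
  filter_upwards [hf0] with x hx
  exact (Real.sq_sqrt hx).symm

theorem MeasureTheory.Integrable.sqrt_mul_sqrt (hf : Integrable f μ) (hg : Integrable g μ)
    (hf0 : 0 ≤ᵐ[μ] f) (hg0 : 0 ≤ᵐ[μ] g) :
    Integrable (fun x => √(f x) * √(g x)) μ :=
  (hf.memLp_two_sqrt hf0).integrable_mul (hg.memLp_two_sqrt hg0)

theorem integral_sqrt_mul_sqrt_le (hf : Integrable f μ) (hg : Integrable g μ)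
    (hf0 : 0 ≤ᵐ[μ] f) (hg0 : 0 ≤ᵐ[μ] g) :
    ∫ x, √(f x) * √(g x) ∂μ ≤ √(∫ x, f x ∂μ) * √(∫ x, g x ∂μ) := by
  have hHolder := integral_mul_le_Lp_mul_Lq_of_nonneg Real.HolderConjugate.two_two
    (.of_forall fun x => Real.sqrt_nonneg (f x)) (.of_forall fun x => Real.sqrt_nonneg (g x))
    (by simpa using hf.memLp_two_sqrt hf0) (by simpa using hg.memLp_two_sqrt hg0)
  have hsq : ∀ {h : α → ℝ}, 0 ≤ᵐ[μ] h → ∫ x, √(h x) ^ (2 : ℝ) ∂μ = ∫ x, h x ∂μ := fun h0 =>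
    integral_congr_ae <| h0.mono fun x hx => by simp only [Real.rpow_two, Real.sq_sqrt hx]
  rwa [hsq hf0, hsq hg0, ← Real.sqrt_eq_rpow, ← Real.sqrt_eq_rpow] at hHolder

end CauchySchwarz

theorem norm_integral_le_sqrt_mul_sqrt_of_weight {α E : Type*} [MeasurableSpace α]
    {μ : Measure α} [NormedAddCommGroup E] [NormedSpace ℝ E] {f : α → E} {q : α → ℝ}
    (hq : ∀ x, q x ≠ 0) (hq_int : Integrable (fun x => (q x ^ 2)⁻¹) μ)
    (hf : Integrable (fun x => q x ^ 2 * ‖f x‖ ^ 2) μ) :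
    ‖∫ x, f x ∂μ‖ ≤ √(∫ x, (q x ^ 2)⁻¹ ∂μ) * √(∫ x, q x ^ 2 * ‖f x‖ ^ 2 ∂μ) := by
  have hsplit : ∀ x, ‖f x‖ = √((q x ^ 2)⁻¹) * √(q x ^ 2 * ‖f x‖ ^ 2) := fun x => by
    rw [Real.sqrt_inv, Real.sqrt_mul (sq_nonneg _), Real.sqrt_sq_eq_abs,
      Real.sqrt_sq (norm_nonneg _), inv_mul_cancel_left₀ (abs_ne_zero.2 (hq x))]
  calc ‖∫ x, f x ∂μ‖ ≤ ∫ x, ‖f x‖ ∂μ := norm_integral_le_integral_norm f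
    _ = ∫ x, √((q x ^ 2)⁻¹) * √(q x ^ 2 * ‖f x‖ ^ 2) ∂μ := by simp_rw [← hsplit]
    _ ≤ _ := integral_sqrt_mul_sqrt_le hq_int hf
        (.of_forall fun x => by positivity)
        (.of_forall fun x => by positivity)

section GaussianWeight

variable {ε t : ℝ}

theorem continuous_rho : Continuous (rho ε t) := by
  unfold rho; fun_prop

theorem inv_rho_sq_le (hε : 0 < ε) (ht : 0 ≤ t) (htε : t ≤ ε) (y : ℝ) :
    (rho ε t y ^ 2)⁻¹ ≤ Real.exp (-(1 / 8) * y ^ 2) := by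
  have hs : 1 + t / ε ≤ 2 := by linarith [(div_le_one hε).2 htε]
  rw [rho, ← Real.exp_nat_mul, ← Real.exp_neg, Real.exp_le_exp, neg_mul, neg_le_neg_iff,
    Nat.cast_ofNat, mul_div_assoc', le_div_iff₀ (by positivity)]
  nlinarith [sq_nonneg y]

theorem integrableOn_inv_rho_sq (hε : 0 < ε) (ht : 0 ≤ t) (htε : t ≤ ε) :
    IntegrableOn (fun y => (rho ε t y ^ 2)⁻¹) (Ioi 0) :=
  (integrable_exp_neg_mul_sq (by norm_num : (0 : ℝ) < 1 / 8)).integrableOn.mono'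
    ((continuous_rho.pow 2).inv₀ fun y => (pow_pos (Real.exp_pos _) 2).ne').aestronglyMeasurable
    (.of_forall fun y => by
      rw [Real.norm_of_nonneg (by positivity)]; exact inv_rho_sq_le hε ht htε y)

theorem setIntegral_inv_rho_sq_le (hε : 0 < ε) (ht : 0 ≤ t) (htε : t ≤ ε) :
    ∫ y in Ioi 0, (rho ε t y ^ 2)⁻¹ ≤ 9 := by
  have hG := integrable_exp_neg_mul_sq (by norm_num : (0 : ℝ) < 1 / 8)
  calc ∫ y in Ioi 0, (rho ε t y ^ 2)⁻¹
      ≤ ∫ y in Ioi 0, Real.exp (-(1 / 8) * y ^ 2) :=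
        setIntegral_mono (integrableOn_inv_rho_sq hε ht htε) hG.integrableOn
          (inv_rho_sq_le hε ht htε)
    _ ≤ ∫ y, Real.exp (-(1 / 8) * y ^ 2) :=
        setIntegral_le_integral hG (.of_forall fun y => (Real.exp_pos _).le)
    _ = √(Real.pi / (1 / 8)) := integral_gaussian _
    _ ≤ √(9 ^ 2) := Real.sqrt_le_sqrt (by linarith [Real.pi_le_four])
    _ = 9 := Real.sqrt_sq (by norm_num)

theorem norm_setIntegral_Ioi_le_three_mul {E : Type*} [NormedAddCommGroup E] [NormedSpace ℝ E]
    (hε : 0 < ε) (ht : 0 ≤ t) (htε : t ≤ ε) {f : ℝ → E}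
    (hf : IntegrableOn (fun y => rho ε t y ^ 2 * ‖f y‖ ^ 2) (Ioi 0)) :
    ‖∫ y in Ioi 0, f y‖ ≤ 3 * √(∫ y in Ioi 0, rho ε t y ^ 2 * ‖f y‖ ^ 2) := by
  refine (norm_integral_le_sqrt_mul_sqrt_of_weight (fun y => (Real.exp_pos _).ne')
    (integrableOn_inv_rho_sq hε ht htε) hf).trans (mul_le_mul_of_nonneg_right ?_ (by positivity))
  calc √(∫ y in Ioi 0, (rho ε t y ^ 2)⁻¹) ≤ √(3 ^ 2) :=
        Real.sqrt_le_sqrt ((setIntegral_inv_rho_sq_le hε ht htε).trans (by norm_num))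
    _ = 3 := Real.sqrt_sq (by norm_num)

end GaussianWeight

theorem wgt_eq_rho_sq_mul_aWgt (ε t τ s ξ y : ℝ) :
    wgt ε t τ s ξ y = rho ε t y ^ 2 * aWgt τ s ξ := by
  rw [wgt, aWgt]; ring

theorem aWgt_pos (τ s ξ : ℝ) : 0 < aWgt τ s ξ :=
  mul_pos (Real.exp_pos _) (Real.rpow_pos_of_pos (Real.sqrt_pos.2 (by positivity)) _)

theorem norm_mul_setIntegral_mul_conj_le {ε t τ r : ℝ} (hε : 0 < ε) (ht : 0 ≤ t) (htε : t ≤ ε)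
    (ξ : ℝ) (f : ℝ → ℂ) (a : ℂ)
    (hf : IntegrableOn (fun y => |ξ| * ‖f y‖ ^ 2 * wgt ε t τ r ξ y) (Ioi 0)) :
    ‖Complex.I * ξ * (∫ y in Ioi 0, f y) * starRingEnd ℂ a * (aWgt τ r ξ : ℂ)‖ ≤
      3 * (√(∫ y in Ioi 0, |ξ| * ‖f y‖ ^ 2 * wgt ε t τ r ξ y) *
        √(|ξ| * ‖a‖ ^ 2 * aWgt τ r ξ)) := by
  set c := |ξ| * aWgt τ r ξ
  have hc : 0 ≤ c := mul_nonneg (abs_nonneg ξ) (aWgt_pos τ r ξ).le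
  have hsplit : ∀ y, |ξ| * ‖f y‖ ^ 2 * wgt ε t τ r ξ y = c * (rho ε t y ^ 2 * ‖f y‖ ^ 2) :=
    fun y => by rw [wgt_eq_rho_sq_mul_aWgt]; ring
  have hnorm : ‖Complex.I * ξ * (∫ y in Ioi 0, f y) * starRingEnd ℂ a * (aWgt τ r ξ : ℂ)‖ =
      c * ‖∫ y in Ioi 0, f y‖ * ‖a‖ := by
    simp only [norm_mul, Complex.norm_I, Complex.norm_real, RCLike.norm_conj, Real.norm_eq_abs,
      abs_of_pos (aWgt_pos τ r ξ), c]
    ring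
  have hinner : c * ‖∫ y in Ioi 0, f y‖ ≤
      c * (3 * √(∫ y in Ioi 0, rho ε t y ^ 2 * ‖f y‖ ^ 2)) := by
    rcases hc.eq_or_lt with hc0 | hc0
    · simp [← hc0]
    refine mul_le_mul_of_nonneg_left (norm_setIntegral_Ioi_le_three_mul hε ht htε ?_) hc
    simpa only [IntegrableOn, hsplit, inv_mul_cancel_left₀ hc0.ne'] using hf.const_mul c⁻¹
  simp_rw [hsplit, integral_const_mul, show |ξ| * ‖a‖ ^ 2 * aWgt τ r ξ = c * ‖a‖ ^ 2 by ring,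
    Real.sqrt_mul hc, Real.sqrt_sq (norm_nonneg a), hnorm]
  set Y := √(∫ y in Ioi 0, rho ε t y ^ 2 * ‖f y‖ ^ 2)
  calc c * ‖∫ y in Ioi 0, f y‖ * ‖a‖ ≤ c * (3 * Y) * ‖a‖ := by gcongr
    _ = 3 * (√c * Y * (√c * ‖a‖)) := by
      linear_combination (-3 * Y * ‖a‖) * Real.mul_self_sqrt hc

/-- **Bound on `T_{𝒜,1}`** (first estimate of (3.16a) in the paper): with a universal
constant `C`, `|∫ iξ (∫_0^∞ w̄_ξ dy) conj(A_ξ) e^{2τ|ξ|}⟨ξ⟩^{2r} dξ|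
≤ C ‖|∂ₓ|^{1/2} w̄‖_{τ,r} ‖|∂ₓ|^{1/2} A‖~_{τ,r}`. -/
theorem TA1_bound :
    ∃ C : ℝ, 0 < C ∧
    ∀ (ε t τ r : ℝ), 0 < ε → ε ≤ 1 → 0 ≤ t → t ≤ ε → 0 < τ →
    ∀ (w : ℝ → ℝ → ℂ) (A : ℝ → ℂ),
      wFinite ε t τ r (fun ξ => |ξ|) w →
      aFinite τ r (fun ξ => |ξ|) A →
      (∀ ξ : ℝ, IntegrableOn (w ξ) (Ioi 0)) →
      Integrable (fun ξ : ℝ =>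
        Complex.I * (ξ : ℂ) * (∫ y in Ioi (0 : ℝ), w ξ y) * (starRingEnd ℂ) (A ξ) *
          ((aWgt τ r ξ : ℝ) : ℂ)) →
      ‖∫ ξ : ℝ, Complex.I * (ξ : ℂ) * (∫ y in Ioi (0 : ℝ), w ξ y) * (starRingEnd ℂ) (A ξ) *
          ((aWgt τ r ξ : ℝ) : ℂ)‖
        ≤ C * wNorm ε t τ r (fun ξ => |ξ|) w * aNorm τ r (fun ξ => |ξ|) A := by
  refine ⟨3, by norm_num, fun ε t τ r hε _ ht htε _ w A hw hA _ _ => ?_⟩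
  set F := fun ξ => ∫ y in Ioi (0 : ℝ), |ξ| * ‖w ξ y‖ ^ 2 * wgt ε t τ r ξ y
  set G := fun ξ => |ξ| * ‖A ξ‖ ^ 2 * aWgt τ r ξ
  have hF : Integrable F := hw.integral_prod_left
  have hF0 : 0 ≤ F := fun ξ => integral_nonneg fun y => by
    have := (aWgt_pos τ r ξ).le; rw [wgt_eq_rho_sq_mul_aWgt]; positivity
  have hG0 : 0 ≤ G := fun ξ => mul_nonneg (by positivity) (aWgt_pos τ r ξ).le
  calc _ ≤ ∫ ξ, 3 * (√(F ξ) * √(G ξ)) :=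
        norm_integral_le_of_norm_le
          ((hF.sqrt_mul_sqrt hA (.of_forall hF0) (.of_forall hG0)).const_mul 3)
          (by filter_upwards [hw.prod_right_ae] with ξ hξ
              exact norm_mul_setIntegral_mul_conj_le hε ht htε ξ (w ξ) (A ξ) hξ)
    _ = 3 * ∫ ξ, √(F ξ) * √(G ξ) := integral_const_mul _ _
    _ ≤ 3 * (√(∫ ξ, F ξ) * √(∫ ξ, G ξ)) := by
      gcongr; exact integral_sqrt_mul_sqrt_le hF hA (.of_forall hF0) (.of_forall hG0)
    _ = _ := (mul_assoc _ _ _).symm
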